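/- Let E be a nonempty subset of a Banach space X and let T : E → P(E) satisfy condition (C). If {x_k} is a sequence in E converging strongly to some w ∈ E with lim_{k→∞} dist(x_k, T(x_k)) = 0, then dist(w, T(w)) = 0; in particular, if T(w) is closed then w is a fixed point of T. -/

import Mathlib

/-!
Suzuki's key estimate: under condition (C), `dist(a, T b) ≤ 3 dist(a, T a) + ‖a - b‖`.
When `‖a - b‖ ≥ dist(a, T a) / 2` this is condition (C) itself; otherwise one passes through a
nearest point `z ∈ T a`, for which both pairs `(a, z)` and `(z, b)` satisfy the premise of (C).
Applied with `a = x_k`, `b = w`, the right-hand side tends to `0` while the left-hand side tends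
to `dist(w, T w)` by continuity of the distance to a set.
-/

open Metric Bornology Filter

section PseudoMetric

variable {α : Type*} [PseudoMetricSpace α]

def ConditionC (E : Set α) (T : α → Set α) : Prop :=
  ∀ x ∈ E, ∀ y ∈ E,
    (1 / 2) * infDist x (T x) ≤ dist x y → hausdorffDist (T x) (T y) ≤ dist x y

namespace ConditionC

variable {E : Set α} {T : α → Set α} (hC : ConditionC E T)
  (hfin : ∀ a ∈ E, ∀ b ∈ E, hausdorffEDist (T a) (T b) ≠ ⊤)
include hC hfin

theorem infDist_le_infDist_add_dist {a b : α} (ha : a ∈ E) (hb : b ∈ E)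
    (hab : (1 / 2) * infDist a (T a) ≤ dist a b) (c : α) :
    infDist c (T b) ≤ infDist c (T a) + dist a b := by
  linarith [infDist_le_infDist_add_hausdorffDist (x := c) (hfin a ha b hb), hC a ha b hb hab]

theorem infDist_le_three_mul_infDist_add_dist {a b z : α} (ha : a ∈ E) (hb : b ∈ E)
    (hzT : z ∈ T a) (hzE : z ∈ E) (hz : dist a z = infDist a (T a)) :
    infDist a (T b) ≤ 3 * infDist a (T a) + dist a b := by
  have hd : 0 ≤ infDist a (T a) := infDist_nonneg
  by_cases hab : (1 / 2) * infDist a (T a) ≤ dist a b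
  · linarith [hC.infDist_le_infDist_add_dist hfin ha hb hab a]
  have haz : (1 / 2) * infDist a (T a) ≤ dist a z := by linarith
  have hzTz : infDist z (T z) ≤ infDist a (T a) := by
    have := hC.infDist_le_infDist_add_dist hfin ha hzE haz z
    rwa [infDist_zero_of_mem hzT, zero_add, hz] at this
  have hzb : (1 / 2) * infDist z (T z) ≤ dist z b := by
    linarith [dist_triangle a b z, dist_comm b z]
  have hTaTz := hC.infDist_le_infDist_add_dist hfin ha hzE haz a
  have hTzTb := hC.infDist_le_infDist_add_dist hfin hzE hb hzb a
  linarith [dist_triangle z a b, dist_comm z a]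

theorem infDist_eq_zero_of_tendsto (hsub : ∀ a ∈ E, T a ⊆ E)
    (hprox : ∀ a ∈ E, ∃ z ∈ T a, dist a z = infDist a (T a))
    {x : ℕ → α} (hxE : ∀ k, x k ∈ E) {w : α} (hwE : w ∈ E)
    (hxw : Tendsto x atTop (nhds w))
    (hdist : Tendsto (fun k => infDist (x k) (T (x k))) atTop (nhds 0)) :
    infDist w (T w) = 0 := by
  have hbound : ∀ k, infDist (x k) (T w) ≤ 3 * infDist (x k) (T (x k)) + dist (x k) w := by
    intro k
    obtain ⟨z, hzT, hz⟩ := hprox (x k) (hxE k)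
    exact hC.infDist_le_three_mul_infDist_add_dist hfin (hxE k) hwE hzT
      (hsub _ (hxE k) hzT) hz
  have hleft : Tendsto (fun k => infDist (x k) (T w)) atTop (nhds (infDist w (T w))) :=
    ((continuous_infDist_pt _).tendsto w).comp hxw
  have hright : Tendsto (fun k => 3 * infDist (x k) (T (x k)) + dist (x k) w) atTop (nhds 0) := by
    simpa using (hdist.const_mul 3).add (tendsto_iff_dist_tendsto_zero.1 hxw)
  exact le_antisymm (le_of_tendsto_of_tendsto' hleft hright hbound) infDist_nonneg

end ConditionC

end PseudoMetric

theorem condition_C_demiclosedness_general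
    {X : Type*} [NormedAddCommGroup X]
    (E : Set X) (T : X → Set X)
    (hT : ∀ x ∈ E, (T x).Nonempty ∧ IsBounded (T x) ∧ T x ⊆ E ∧
      ∀ p : X, ∃ q ∈ T x, ‖p - q‖ = infDist p (T x))
    (hC : ∀ x ∈ E, ∀ y ∈ E,
      (1 / 2) * infDist x (T x) ≤ ‖x - y‖ →
        hausdorffDist (T x) (T y) ≤ ‖x - y‖)
    (x : ℕ → X) (hxE : ∀ k, x k ∈ E) (w : X) (hwE : w ∈ E)
    (hxw : Tendsto x atTop (nhds w))
    (hdist : Tendsto (fun k => infDist (x k) (T (x k))) atTop (nhds 0)) :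
    infDist w (T w) = 0 ∧ (IsClosed (T w) → w ∈ T w) := by
  have hCdist : ConditionC E T := by unfold ConditionC; simpa only [dist_eq_norm] using hC
  have hfin : ∀ a ∈ E, ∀ b ∈ E, hausdorffEDist (T a) (T b) ≠ ⊤ := fun a ha b hb =>
    hausdorffEDist_ne_top_of_nonempty_of_bounded (hT a ha).1 (hT b hb).1 (hT a ha).2.1
      (hT b hb).2.1
  have hzero : infDist w (T w) = 0 :=
    hCdist.infDist_eq_zero_of_tendsto hfin (fun a ha => (hT a ha).2.2.1)
      (fun a ha => by simpa only [dist_eq_norm] using (hT a ha).2.2.2 a) hxE hwE hxw hdist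
  exact ⟨hzero, fun hcl => (hcl.mem_iff_infDist_zero (hT w hwE).1).2 hzero⟩

/-- If `T : E → P(E)` satisfies condition (C) and `x_k → w` in `E` with
`dist(x_k, T x_k) → 0`, then `dist(w, T w) = 0`; in particular if `T w` is
closed then `w` is a fixed point of `T`. -/
theorem condition_C_demiclosedness
    {X : Type*} [NormedAddCommGroup X] [NormedSpace ℝ X] [CompleteSpace X]
    (E : Set X) (hE : E.Nonempty) (T : X → Set X)
    (hT : ∀ x ∈ E, (T x).Nonempty ∧ IsBounded (T x) ∧ T x ⊆ E ∧
      ∀ p : X, ∃ q ∈ T x, ‖p - q‖ = infDist p (T x))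
    (hC : ∀ x ∈ E, ∀ y ∈ E,
      (1 / 2) * infDist x (T x) ≤ ‖x - y‖ →
        hausdorffDist (T x) (T y) ≤ ‖x - y‖)
    (x : ℕ → X) (hxE : ∀ k, x k ∈ E) (w : X) (hwE : w ∈ E)
    (hxw : Tendsto x atTop (nhds w))
    (hdist : Tendsto (fun k => infDist (x k) (T (x k))) atTop (nhds 0)) :
    infDist w (T w) = 0 ∧ (IsClosed (T w) → w ∈ T w) :=
  condition_C_demiclosedness_general E T hT hC x hxE w hwE hxw hdist
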